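/- arXiv:0901.3889 — 6 statements merged into one kernel-verified Lean document; each statement's English description precedes it below -/
import Mathlib

section
/- Let x₁,…,xₙ ∈ [-1,1] \ {0} with |x₁| ≤ |x₂| ≤ ⋯ ≤ |xₙ|, and let f(x) = ∏_{i=1}^n (x - x_i). Then for every s ≤ n, sup_{0 ≤ j ≤ s} |f^{(j)}(0)| ≤ (n!/(n-s)!) ∏_{i=s+1}^n |x_i|. -/
/-!
Since `f = ∏ (X - xᵢ)`, `f^{(j)}(0) = j! · [X^j] f`, and by Vieta `[X^j] f = ± e_{n-j}(x)`.
Each of the `C(n, j)` terms of `e_{n-j}(x)` is a product of `n - j` of the `|xᵢ|`, hence at most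
the product `P_j` of the `n - j` largest ones. So `|f^{(j)}(0)| ≤ n!/(n-j)! · P_j`, and this
bound increases with `j`: the falling factorial does, and `P_j` loses factors `|xᵢ| ≤ 1`.
-/

open Polynomial Finset
open scoped Nat

theorem Finset.prod_le_prod_of_isUpperSet {ι R : Type*} [LinearOrder ι] [CommSemiring R]
    [PartialOrder R] [IsOrderedRing R] {f : ι → R} (hf : Monotone f) (hf0 : ∀ i, 0 ≤ f i)
    {s u : Finset ι} (hu : IsUpperSet (u : Set ι)) (hcard : #s = #u) :
    ∏ i ∈ s, f i ≤ ∏ i ∈ u, f i := by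
  classical
  rcases (u \ s).eq_empty_or_nonempty with hus | hus
  · rw [eq_of_subset_of_card_le (sdiff_eq_empty_iff_subset.mp hus) hcard.le]
  -- Everything in `s \ u` lies below everything in `u \ s`, so `f` at the least element of
  -- `u \ s` separates the two.
  set c := f ((u \ s).min' hus)
  have hlow : ∀ i ∈ s \ u, f i ≤ c := fun i hi => by
    have hmin := (mem_sdiff.mp ((u \ s).min'_mem hus)).1
    exact hf (le_of_lt (lt_of_not_ge fun h => (mem_sdiff.mp hi).2 (hu h hmin)))
  have hhigh : ∀ k ∈ u \ s, c ≤ f k := fun k hk => hf ((u \ s).min'_le k hk)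
  have hprod0 : ∀ t : Finset ι, 0 ≤ ∏ i ∈ t, f i := fun t => prod_nonneg fun i _ => hf0 i
  calc ∏ i ∈ s, f i = (∏ i ∈ s ∩ u, f i) * ∏ i ∈ s \ u, f i :=
        (prod_inter_mul_prod_sdiff s u f).symm
    _ ≤ (∏ i ∈ s ∩ u, f i) * ∏ _i ∈ s \ u, c :=
        mul_le_mul_of_nonneg_left (prod_le_prod (fun i _ => hf0 i) hlow) (hprod0 _)
    _ = (∏ i ∈ u ∩ s, f i) * ∏ _k ∈ u \ s, c := by
        rw [inter_comm, prod_const, prod_const, card_sdiff_comm hcard]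
    _ ≤ (∏ i ∈ u ∩ s, f i) * ∏ k ∈ u \ s, f k :=
        mul_le_mul_of_nonneg_left (prod_le_prod (fun _ _ => hf0 _) hhigh) (hprod0 _)
    _ = ∏ i ∈ u, f i := prod_inter_mul_prod_sdiff u s f

theorem Multiset.abs_esymm_map_univ_le {ι R : Type*} [Fintype ι] [LinearOrder ι] [CommRing R]
    [LinearOrder R] [IsStrictOrderedRing R] {x : ι → R} (hx : Monotone fun i => |x i|)
    {u : Finset ι} (hu : IsUpperSet (u : Set ι)) :
    |(univ.val.map x).esymm #u| ≤ (Fintype.card ι).choose #u * ∏ i ∈ u, |x i| := by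
  rw [esymm_map_val]
  calc |∑ t ∈ Finset.powersetCard (#u) univ, ∏ i ∈ t, x i|
      ≤ ∑ t ∈ Finset.powersetCard (#u) univ, ∏ i ∈ t, |x i| := by
        simpa only [abs_prod] using Finset.abs_sum_le_sum_abs (fun t => ∏ i ∈ t, x i) _
    _ ≤ ∑ _t ∈ Finset.powersetCard (#u) univ, ∏ i ∈ u, |x i| :=
        sum_le_sum fun t ht => prod_le_prod_of_isUpperSet hx (fun i => abs_nonneg _) hu
          (Finset.mem_powersetCard.mp ht).2
    _ = (Fintype.card ι).choose #u * ∏ i ∈ u, |x i| := by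
        rw [sum_const, Finset.card_powersetCard, card_univ, nsmul_eq_mul]

theorem Fin.card_filter_le_val (n j : ℕ) : #{i : Fin n | j ≤ (i : ℕ)} = n - j := by
  have h := card_filter_add_card_filter_not (s := (univ : Finset (Fin n)))
    (fun i : Fin n => (i : ℕ) < j)
  simp only [not_lt, Fin.card_filter_val_lt, card_univ, Fintype.card_fin] at h
  omega

theorem Polynomial.abs_coeff_prod_X_sub_C_le {R : Type*} [CommRing R] [LinearOrder R]
    [IsStrictOrderedRing R] {n j : ℕ} (hj : j ≤ n) {x : Fin n → R}
    (hx : Monotone fun i => |x i|) :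
    |(∏ i, (X - C (x i))).coeff j| ≤
      n.choose j * ∏ i ∈ univ.filter (fun i : Fin n => j ≤ (i : ℕ)), |x i| := by
  have hu : IsUpperSet ((univ.filter fun i : Fin n => j ≤ (i : ℕ)) : Set (Fin n)) :=
    fun a b hab ha => by
      simp_all only [coe_filter, mem_univ, true_and, Set.mem_ofPred_eq]
      exact ha.trans hab
  have hprod : ∏ i, (X - C (x i)) = ((univ.val.map x).map fun t => X - C t).prod := by
    rw [Multiset.map_map]; rfl
  have hvieta := Multiset.prod_X_sub_C_coeff (univ.val.map x) (k := j) (by simpa using hj)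
  simp only [Multiset.card_map, card_val, card_univ, Fintype.card_fin] at hvieta
  have hesymm := Multiset.abs_esymm_map_univ_le hx hu
  rw [Fin.card_filter_le_val, Fintype.card_fin, Nat.choose_symm hj] at hesymm
  rwa [hprod, hvieta, abs_mul, abs_pow, abs_neg, abs_one, one_pow, one_mul]

theorem Polynomial.iteratedDeriv_eval {𝕜 : Type*} [NontriviallyNormedField 𝕜] (k : ℕ)
    (p : 𝕜[X]) :
    iteratedDeriv k (fun t => p.eval t) = fun t => (derivative^[k] p).eval t := by
  induction k generalizing p with
  | zero => rfl
  | succ k ih =>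
    have hderiv : _root_.deriv (fun t => p.eval t) = fun t => p.derivative.eval t :=
      _root_.funext fun _ => Polynomial.deriv p
    rw [iteratedDeriv_succ', hderiv, ih, Function.iterate_succ_apply]

theorem Polynomial.iteratedDeriv_eval_zero {𝕜 : Type*} [NontriviallyNormedField 𝕜] (k : ℕ)
    (p : 𝕜[X]) : iteratedDeriv k (fun t => p.eval t) 0 = k ! * p.coeff k := by
  rw [iteratedDeriv_eval]
  dsimp only
  rw [← coeff_zero_eq_eval_zero, coeff_iterate_derivative, zero_add,
    Nat.descFactorial_self, nsmul_eq_mul]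

theorem Nat.descFactorial_le_descFactorial {n j s : ℕ} (hjs : j ≤ s) (hs : s ≤ n) :
    n.descFactorial j ≤ n.descFactorial s := by
  rw [← Nat.descFactorial_mul_descFactorial hjs]
  exact Nat.le_mul_of_pos_left _ (Nat.descFactorial_pos.mpr (by omega))

theorem stmt0_general (n : ℕ) (x : Fin n → ℝ)
    (hx1 : ∀ i, |x i| ≤ 1)
    (hmono : ∀ i j : Fin n, i ≤ j → |x i| ≤ |x j|)
    (f : ℝ → ℝ) (hf : f = fun t => ∏ i, (t - x i))
    (s : ℕ) (hs : s ≤ n) :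
    ∀ j ≤ s, |iteratedDeriv j f 0| ≤
      (n.descFactorial s : ℝ) *
        ∏ i ∈ Finset.univ.filter (fun i : Fin n => s ≤ (i : ℕ)), |x i| := by
  intro j hjs
  have hfX : f = fun t => (∏ i, (X - C (x i))).eval t := by simp [hf, eval_prod]
  have htail : ∏ i ∈ univ.filter (fun i : Fin n => j ≤ (i : ℕ)), |x i| ≤
      ∏ i ∈ univ.filter (fun i : Fin n => s ≤ (i : ℕ)), |x i| :=
    prod_le_prod_of_subset_of_le_one
      (fun i hi => by simp only [mem_filter, mem_univ, true_and] at hi ⊢; omega)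
      (fun i _ => abs_nonneg _) (fun i _ _ => hx1 i)
  calc |iteratedDeriv j f 0| = j ! * |(∏ i, (X - C (x i))).coeff j| := by
        rw [hfX, iteratedDeriv_eval_zero, abs_mul, Nat.abs_cast]
    _ ≤ j ! * (n.choose j * ∏ i ∈ univ.filter (fun i : Fin n => j ≤ (i : ℕ)), |x i|) := by
        gcongr
        exact abs_coeff_prod_X_sub_C_le (hjs.trans hs) hmono
    _ = n.descFactorial j * ∏ i ∈ univ.filter (fun i : Fin n => j ≤ (i : ℕ)), |x i| := by
        rw [Nat.descFactorial_eq_factorial_mul_choose]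
        push_cast
        ring
    _ ≤ n.descFactorial s * ∏ i ∈ univ.filter (fun i : Fin n => s ≤ (i : ℕ)), |x i| := by
        gcongr
        exact Nat.descFactorial_le_descFactorial hjs hs

/-- Upper bound on derivatives of a polynomial with roots in `[-1,1]`. -/
theorem stmt0 (n : ℕ) (x : Fin n → ℝ)
    (hx0 : ∀ i, x i ≠ 0) (hx1 : ∀ i, |x i| ≤ 1)
    (hmono : ∀ i j : Fin n, i ≤ j → |x i| ≤ |x j|)
    (f : ℝ → ℝ) (hf : f = fun t => ∏ i, (t - x i))
    (s : ℕ) (hs : s ≤ n) :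
    ∀ j ≤ s, |iteratedDeriv j f 0| ≤
      (n.descFactorial s : ℝ) *
        ∏ i ∈ Finset.univ.filter (fun i : Fin n => s ≤ (i : ℕ)), |x i| :=
  stmt0_general n x hx1 hmono f hf s hs
end

section
/- Let x₁,…,xₙ ∈ [-1,1] \ {0} with |x₁| < |x₂| < ⋯ < |xₙ|, and f(x) = ∏_{i=1}^n (x - x_i). Then for every s with 0 ≤ s < n there is a point x̄_s ∈ [-1,1] with |x̄_s| ≤ |x_s| (for s ≥ 1; |x̄_0| = 0) such that |f^{(s)}(x̄_s)| ≥ (1/2^s) ∏_{i=s+1}^n |x_i| > 0. -/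
/-!
Write `cₛ = 2⁻ˢ ∏_{i ≥ s} |xᵢ|` (indices start at `0`) and induct on `s`. The `s + 1` roots
`x₀, …, xₛ` of `f` lie in `[-|xₛ|, |xₛ|]`, so by Rolle's theorem applied `s` times `f⁽ˢ⁾` has a
root `y` there. If `|f⁽ˢ⁾(u)| ≥ cₛ` at a point `u` of the same interval, the mean value theorem
between `u` and `y` gives a point `ξ` of the interval with `|f⁽ˢ⁺¹⁾(ξ)| ≥ cₛ / (2|xₛ|) = cₛ₊₁`,
and `|xₛ| ≤ |xₛ₊₁|` lets the induction continue.
-/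

open Finset

section Rolle

variable {g : ℝ → ℝ} {a b : ℝ}

theorem exists_finset_deriv_eq_zero (hg : Differentiable ℝ g) {k : ℕ} {S : Finset ℝ}
    (hS : S.card = k + 1) (hSI : ↑S ⊆ Set.Icc a b) (hS0 : ∀ y ∈ S, g y = 0) :
    ∃ T : Finset ℝ, T.card = k ∧ ↑T ⊆ Set.Icc a b ∧ ∀ y ∈ T, deriv g y = 0 := by
  set e := S.orderEmbOfFin hS
  have he : ∀ i, e i ∈ Set.Icc a b := fun i => hSI (S.orderEmbOfFin_mem hS i)
  choose c hc hc0 using fun i : Fin k =>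
    exists_deriv_eq_zero (e.strictMono i.castSucc_lt_succ) hg.continuous.continuousOn
      ((hS0 _ (S.orderEmbOfFin_mem hS _)).trans (hS0 _ (S.orderEmbOfFin_mem hS _)).symm)
  have hc_mono : StrictMono c := fun i j hij =>
    calc c i < e i.succ := (hc i).2
      _ ≤ e j.castSucc := e.monotone (Fin.succ_le_castSucc_iff.mpr hij)
      _ < c j := (hc j).1
  refine ⟨univ.image c, by rw [card_image_of_injective _ hc_mono.injective, card_fin], ?_, ?_⟩
  · intro y hy
    obtain ⟨i, -, rfl⟩ := mem_image.mp hy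
    exact ⟨(he _).1.trans (hc i).1.le, (hc i).2.le.trans (he _).2⟩
  · intro y hy
    obtain ⟨i, -, rfl⟩ := mem_image.mp hy
    exact hc0 i

theorem exists_iteratedDeriv_eq_zero {k : ℕ} (hg : ContDiff ℝ k g) {S : Finset ℝ}
    (hS : S.card = k + 1) (hSI : ↑S ⊆ Set.Icc a b) (hS0 : ∀ y ∈ S, g y = 0) :
    ∃ y ∈ Set.Icc a b, iteratedDeriv k g y = 0 := by
  induction k generalizing g S with
  | zero =>
    obtain ⟨y, hy⟩ : S.Nonempty := card_pos.mp (by omega)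
    exact ⟨y, hSI hy, by simpa using hS0 y hy⟩
  | succ k ih =>
    rw [Nat.cast_succ, contDiff_succ_iff_deriv] at hg
    obtain ⟨T, hT, hTI, hT0⟩ := exists_finset_deriv_eq_zero hg.1 hS hSI hS0
    rw [iteratedDeriv_succ']
    exact ih hg.2.2 hT hTI hT0

theorem exists_abs_sub_le_mul_abs_deriv (hg : Differentiable ℝ g) {u v : ℝ}
    (hu : u ∈ Set.Icc a b) (hv : v ∈ Set.Icc a b) :
    ∃ ξ ∈ Set.Icc a b, |g u - g v| ≤ (b - a) * |deriv g ξ| := by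
  wlog huv : u ≤ v generalizing u v
  · obtain ⟨ξ, hξ, h⟩ := this hv hu (le_of_not_ge huv)
    exact ⟨ξ, hξ, abs_sub_comm (g u) (g v) ▸ h⟩
  rcases huv.eq_or_lt with rfl | huv
  · exact ⟨u, hu, by simpa using mul_nonneg (sub_nonneg.mpr (hu.1.trans hu.2)) (abs_nonneg _)⟩
  obtain ⟨ξ, hξ, hslope⟩ := exists_deriv_eq_slope g huv hg.continuous.continuousOn
    hg.differentiableOn
  refine ⟨ξ, ⟨hu.1.trans hξ.1.le, hξ.2.le.trans hv.2⟩, ?_⟩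
  rw [hslope, abs_div, abs_of_pos (sub_pos.mpr huv), abs_sub_comm, mul_div_left_comm]
  exact le_mul_of_one_le_right (abs_nonneg _)
    ((one_le_div (sub_pos.mpr huv)).mpr (by linarith [hu.1, hv.2]))

end Rolle

section RootProduct

variable {n : ℕ} {x : Fin n → ℝ}

noncomputable def derivLowerBound (x : Fin n → ℝ) (s : ℕ) : ℝ :=
  (1 / 2 ^ s : ℝ) * ∏ i ∈ univ.filter (fun i : Fin n => s ≤ (i : ℕ)), |x i|

theorem derivLowerBound_pos (hx0 : ∀ i, x i ≠ 0) (s : ℕ) : 0 < derivLowerBound x s :=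
  mul_pos (by positivity) (prod_pos fun i _ => abs_pos.mpr (hx0 i))

theorem derivLowerBound_zero : derivLowerBound x 0 = |∏ i, (0 - x i)| := by
  simp [derivLowerBound, abs_prod]

theorem derivLowerBound_succ {s : ℕ} (hs : s < n) :
    derivLowerBound x s = 2 * |x ⟨s, hs⟩| * derivLowerBound x (s + 1) := by
  have hfilter : univ.filter (fun i : Fin n => s ≤ (i : ℕ))
      = insert ⟨s, hs⟩ (univ.filter fun i : Fin n => s + 1 ≤ (i : ℕ)) := by
    ext i
    simp only [mem_filter, mem_univ, true_and, mem_insert, Fin.ext_iff]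
    omega
  rw [derivLowerBound, derivLowerBound, hfilter, prod_insert (by simp), pow_succ]
  field_simp

theorem exists_iteratedDeriv_prod_sub_eq_zero (hmono : StrictMono fun i => |x i|) {s : ℕ}
    (hs : s < n) :
    ∃ y ∈ Set.Icc (-|x ⟨s, hs⟩|) |x ⟨s, hs⟩|, iteratedDeriv s (fun t => ∏ i, (t - x i)) y = 0 := by
  refine exists_iteratedDeriv_eq_zero (contDiff_prod fun i _ => contDiff_id.sub contDiff_const)
    (S := (Iic ⟨s, hs⟩).image x) ?_ ?_ ?_
  · rw [card_image_of_injective _ (Function.Injective.of_comp (f := abs) hmono.injective),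
      Fin.card_Iic]
  · intro y hy
    obtain ⟨i, hi, rfl⟩ := mem_image.mp hy
    exact abs_le.mp (hmono.monotone (mem_Iic.mp hi) : |x i| ≤ |x ⟨s, hs⟩|)
  · intro y hy
    obtain ⟨i, -, rfl⟩ := mem_image.mp hy
    exact prod_eq_zero (mem_univ i) (sub_self _)

theorem exists_abs_iteratedDeriv_prod_sub_ge (hx0 : ∀ i, x i ≠ 0)
    (hmono : StrictMono fun i => |x i|) (s : ℕ) (hs : s < n) :
    ∃ ξ, |ξ| ≤ |x ⟨s, hs⟩| ∧
      derivLowerBound x (s + 1) ≤ |iteratedDeriv (s + 1) (fun t => ∏ i, (t - x i)) ξ| := by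
  set f : ℝ → ℝ := fun t => ∏ i, (t - x i)
  set A := |x ⟨s, hs⟩|
  have hA : 0 < A := abs_pos.mpr (hx0 _)
  obtain ⟨u, hu, hfu⟩ : ∃ u, |u| ≤ A ∧ derivLowerBound x s ≤ |iteratedDeriv s f u| := by
    cases s with
    | zero => exact ⟨0, by simp [A], by simp [f, derivLowerBound_zero]⟩
    | succ s =>
      obtain ⟨u, hu, hfu⟩ := exists_abs_iteratedDeriv_prod_sub_ge hx0 hmono s (by omega)
      exact ⟨u, hu.trans (hmono (Fin.mk_lt_mk.mpr s.lt_succ_self)).le, hfu⟩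
  obtain ⟨y, hy, hfy⟩ := exists_iteratedDeriv_prod_sub_eq_zero hmono hs
  have hf : ContDiff ℝ (s + 1) f := contDiff_prod fun i _ => contDiff_id.sub contDiff_const
  obtain ⟨ξ, hξ, hbound⟩ := exists_abs_sub_le_mul_abs_deriv
    (hf.differentiable_iteratedDeriv s (by norm_cast; omega)) (abs_le.mp hu) hy
  refine ⟨ξ, abs_le.mpr hξ, ?_⟩
  rw [hfy, sub_zero, sub_neg_eq_add, ← two_mul] at hbound
  have hstep : 2 * A * derivLowerBound x (s + 1) ≤ 2 * A * |deriv (iteratedDeriv s f) ξ| :=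
    derivLowerBound_succ hs ▸ hfu.trans hbound
  rw [iteratedDeriv_succ]
  exact le_of_mul_le_mul_left hstep (by positivity)

end RootProduct

/-- Existence of a point `x̄ₛ` with `|x̄ₛ| ≤ |xₛ|` where the `s`-th derivative
is at least `(1/2^s) ∏_{i>s} |x_i| > 0`. -/
theorem stmt2 (n : ℕ) (x : Fin n → ℝ)
    (hx0 : ∀ i, x i ≠ 0) (hx1 : ∀ i, |x i| ≤ 1)
    (hmono : ∀ i j : Fin n, i < j → |x i| < |x j|)
    (f : ℝ → ℝ) (hf : f = fun t => ∏ i, (t - x i))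
    (s : ℕ) (hs : s < n) :
    ∃ xb : ℝ, |xb| ≤ 1 ∧ (s = 0 → xb = 0) ∧
      (∀ _ : 0 < s, |xb| ≤ |x ⟨s - 1, by omega⟩|) ∧
      0 < (1 / 2 ^ s : ℝ) *
          ∏ i ∈ Finset.univ.filter (fun i : Fin n => s ≤ (i : ℕ)), |x i| ∧
      (1 / 2 ^ s : ℝ) *
          ∏ i ∈ Finset.univ.filter (fun i : Fin n => s ≤ (i : ℕ)), |x i| ≤
        |iteratedDeriv s f xb| := by
  subst hf
  cases s with
  | zero =>
    exact ⟨0, by simp, fun _ => rfl, by omega, derivLowerBound_pos hx0 0,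
      by simp [abs_prod]⟩
  | succ s =>
    obtain ⟨ξ, hξ, hbound⟩ := exists_abs_iteratedDeriv_prod_sub_ge hx0 hmono s (by omega)
    exact ⟨ξ, hξ.trans (hx1 _), by omega, fun _ => hξ, derivLowerBound_pos hx0 _, hbound⟩
end

section
/- Let W, W' be p-dimensional subspaces of ℂ^{t+1} and define |W,W'| = sup_{w ∈ W', |w|=1} |pr_{W^⊥}(w)|, where pr_{W^⊥} is the orthogonal projection onto the orthogonal complement of W. Let W ⊂ F be subspaces of ℂ^{t+1} of codimensions q ≥ r respectively. Then every subspace F' of codimension r contains a subspace W' of codimension q such that |W,W'| ≤ |F,F'|. -/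
/-!
Take `W'` inside `F' ∩ pr_F⁻¹(W) = F' ∩ (W ⊕ F^⊥)`. A vector `w = u + v` with
`u ∈ W` and `v ∈ F^⊥ ⊆ W^⊥` has the same component `v` in `W^⊥` and in `F^⊥`, so on `W'` the
projections onto `W^⊥` and `F^⊥` agree and `|W,W'| ≤ |F,F'|`. A dimension count shows that
`F' ∩ (W ⊕ F^⊥)` has dimension at least `dim W`, so it contains a `W'` of the codimension of `W`.
-/

open Module

/-- Grassmannian distance between subspaces: `|W,W'| = sup_{w ∈ W', ‖w‖=1} ‖pr_{W^⊥}(w)‖`. -/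
noncomputable def gDist {ι : Type*} [Fintype ι] [DecidableEq ι]
    (W W' : Submodule ℂ (EuclideanSpace ℂ ι)) : ℝ :=
  ⨆ w : {w : EuclideanSpace ℂ ι // w ∈ W' ∧ ‖w‖ = 1},
    ‖(Submodule.orthogonalProjectionOnto Wᗮ (w : EuclideanSpace ℂ ι) : EuclideanSpace ℂ ι)‖

theorem Submodule.exists_le_finrank_eq {K V : Type*} [DivisionRing K] [AddCommGroup V]
    [Module K V] (S : Submodule K V) [FiniteDimensional K S] {n : ℕ} (h : n ≤ finrank K S) :
    ∃ T : Submodule K V, T ≤ S ∧ finrank K T = n := by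
  obtain ⟨f, hf⟩ := exists_linearIndependent_of_le_finrank (R := K) (M := S) h
  refine ⟨Submodule.span K (Set.range (S.subtype ∘ f)), ?_, ?_⟩
  · rw [Submodule.span_le]
    rintro _ ⟨i, rfl⟩
    exact (f i).2
  · rw [finrank_span_eq_card (hf.map' S.subtype S.ker_subtype), Fintype.card_fin]

section InnerProductSpace

variable {𝕜 E : Type*} [RCLike 𝕜] [NormedAddCommGroup E] [InnerProductSpace 𝕜 E]

theorem Submodule.starProjection_orthogonal_eq_of_mem_sup_orthogonal {W F : Submodule 𝕜 E}
    [W.HasOrthogonalProjection] [F.HasOrthogonalProjection] (hWF : W ≤ F) {w : E}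
    (hw : w ∈ W ⊔ Fᗮ) : Wᗮ.starProjection w = Fᗮ.starProjection w := by
  obtain ⟨u, hu, v, hv, rfl⟩ := Submodule.mem_sup.mp hw
  have hWv : Wᗮ.starProjection (u + v) = v :=
    Submodule.eq_starProjection_of_mem_orthogonal (Submodule.orthogonal_le hWF hv)
      (by simpa using W.le_orthogonal_orthogonal hu)
  have hFv : Fᗮ.starProjection (u + v) = v :=
    Submodule.eq_starProjection_of_mem_orthogonal hv
      (by simpa using F.le_orthogonal_orthogonal (hWF hu))
  rw [hWv, hFv]

variable [FiniteDimensional 𝕜 E]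

theorem Submodule.finrank_sup_orthogonal_of_le {W F : Submodule 𝕜 E} (hWF : W ≤ F) :
    finrank 𝕜 ↥(W ⊔ Fᗮ) = finrank 𝕜 W + finrank 𝕜 Fᗮ := by
  have hdisj : W ⊓ Fᗮ = ⊥ := (F.orthogonal_disjoint.mono_left hWF).eq_bot
  have := Submodule.finrank_sup_add_finrank_inf_eq W Fᗮ
  rwa [hdisj, finrank_bot, add_zero] at this

theorem Submodule.finrank_add_finrank_le_finrank_add_finrank_inf_sup_orthogonal
    {W F : Submodule 𝕜 E} (hWF : W ≤ F) (F' : Submodule 𝕜 E) :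
    finrank 𝕜 W + finrank 𝕜 F' ≤ finrank 𝕜 F + finrank 𝕜 ↥(F' ⊓ (W ⊔ Fᗮ)) := by
  have hsup := Submodule.finrank_sup_add_finrank_inf_eq F' (W ⊔ Fᗮ)
  have hle := Submodule.finrank_le (F' ⊔ (W ⊔ Fᗮ))
  have hF := F.finrank_add_finrank_orthogonal
  rw [Submodule.finrank_sup_orthogonal_of_le hWF] at hsup
  omega

end InnerProductSpace

section GrassmannDistance

variable {ι : Type*} [Fintype ι] [DecidableEq ι]

theorem norm_orthogonalProjectionOnto_le_gDist (F F' : Submodule ℂ (EuclideanSpace ℂ ι))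
    {w : EuclideanSpace ℂ ι} (hw : w ∈ F') (hw1 : ‖w‖ = 1) :
    ‖(Fᗮ.orthogonalProjectionOnto w : EuclideanSpace ℂ ι)‖ ≤ gDist F F' := by
  refine le_ciSup (f := fun w : {w // w ∈ F' ∧ ‖w‖ = 1} =>
    ‖(Fᗮ.orthogonalProjectionOnto (w : EuclideanSpace ℂ ι) : EuclideanSpace ℂ ι)‖)
    ⟨1, ?_⟩ ⟨w, hw, hw1⟩
  rintro _ ⟨⟨y, -, hy1⟩, rfl⟩
  simpa [hy1] using Fᗮ.norm_orthogonalProjectionOnto_apply_le y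

theorem gDist_le_gDist_of_le_inf_sup_orthogonal {W F W' F' : Submodule ℂ (EuclideanSpace ℂ ι)}
    (hWF : W ≤ F) (hW' : W' ≤ F' ⊓ (W ⊔ Fᗮ)) : gDist W W' ≤ gDist F F' := by
  have hnonneg : 0 ≤ gDist F F' := Real.iSup_nonneg fun _ => norm_nonneg _
  refine Real.iSup_le (fun ⟨w, hw, hw1⟩ => ?_) hnonneg
  have hproj := Submodule.starProjection_orthogonal_eq_of_mem_sup_orthogonal hWF (hW' hw).2
  simp only [← Submodule.starProjection_apply, hproj]
  exact norm_orthogonalProjectionOnto_le_gDist F F' (hW' hw).1 hw1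

end GrassmannDistance

theorem stmt6_general (t q r : ℕ)
    (W F : Submodule ℂ (EuclideanSpace ℂ (Fin (t + 1)))) (hWF : W ≤ F)
    (hW : finrank ℂ (EuclideanSpace ℂ (Fin (t + 1))) - finrank ℂ W = q)
    (hF : finrank ℂ (EuclideanSpace ℂ (Fin (t + 1))) - finrank ℂ F = r)
    (F' : Submodule ℂ (EuclideanSpace ℂ (Fin (t + 1))))
    (hF' : finrank ℂ (EuclideanSpace ℂ (Fin (t + 1))) - finrank ℂ F' = r) :
    ∃ W' : Submodule ℂ (EuclideanSpace ℂ (Fin (t + 1))), W' ≤ F' ∧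
      finrank ℂ (EuclideanSpace ℂ (Fin (t + 1))) - finrank ℂ W' = q ∧
      gDist W W' ≤ gDist F F' := by
  have hFF' : finrank ℂ F = finrank ℂ F' := by
    have := F.finrank_le
    have := F'.finrank_le
    omega
  have hdim := Submodule.finrank_add_finrank_le_finrank_add_finrank_inf_sup_orthogonal hWF F'
  obtain ⟨W', hW'S, hW'W⟩ := (F' ⊓ (W ⊔ Fᗮ)).exists_le_finrank_eq (n := finrank ℂ W) (by omega)
  exact ⟨W', hW'S.trans inf_le_left, hW'W ▸ hW,
    gDist_le_gDist_of_le_inf_sup_orthogonal hWF hW'S⟩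

/-- If `W ⊆ F` have codimensions `q ≥ r` in `ℂ^{t+1}`, then every subspace
`F'` of codimension `r` contains a subspace `W'` of codimension `q` with `|W,W'| ≤ |F,F'|`. -/
theorem stmt6 (t q r : ℕ) (hqr : r ≤ q)
    (W F : Submodule ℂ (EuclideanSpace ℂ (Fin (t + 1)))) (hWF : W ≤ F)
    (hW : finrank ℂ (EuclideanSpace ℂ (Fin (t + 1))) - finrank ℂ W = q)
    (hF : finrank ℂ (EuclideanSpace ℂ (Fin (t + 1))) - finrank ℂ F = r)
    (F' : Submodule ℂ (EuclideanSpace ℂ (Fin (t + 1))))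
    (hF' : finrank ℂ (EuclideanSpace ℂ (Fin (t + 1))) - finrank ℂ F' = r) :
    ∃ W' : Submodule ℂ (EuclideanSpace ℂ (Fin (t + 1))), W' ≤ F' ∧
      finrank ℂ (EuclideanSpace ℂ (Fin (t + 1))) - finrank ℂ W' = q ∧
      gDist W W' ≤ gDist F F' :=
  stmt6_general t q r W F hWF hW hF F' hF'
end

section
/- Let W ⊂ ℂ^{t+1} be a subspace, let V ⊂ ℂ^{t+1} be a subspace with V ⊥ W, and let F = W ⊕ V. Let W̃ be any subspace of the same dimension as W with W̃ ∩ V = 0, and let F̃ = W̃ ⊕ V. Then sup_{v ∈ F̃∩V^⊥, |v|=1} |pr_{F^⊥}(v)| ≤ sup_{w ∈ W̃, |w|=1} |pr_{W^⊥}(w)|. -/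
open Module
open Submodule

lemma norm_orthProj_le' {E : Type*} [NormedAddCommGroup E] [InnerProductSpace ℂ E]
    (K : Submodule ℂ E) [HasOrthogonalProjection K] (x : E) :
    ‖(orthogonalProjection K x : E)‖ ≤ ‖x‖ := by
  calc ‖(orthogonalProjection K x : E)‖ = ‖orthogonalProjection K x‖ := rfl
    _ ≤ ‖orthogonalProjection K‖ * ‖x‖ := (orthogonalProjection K).le_opNorm x
    _ ≤ 1 * ‖x‖ := by
        gcongr
        exact orthogonalProjection_norm_le K
    _ = ‖x‖ := one_mul _


lemma stmt7_aux (a b c np nw C : ℝ) (ha0 : 0 ≤ a) (hc0 : 0 ≤ c) (ha : a ≤ c)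
    (hpyth : np ^ 2 = b ^ 2 + c ^ 2) (hwn : nw ^ 2 = b ^ 2 + 1)
    (h2 : np ^ 2 ≤ C ^ 2 * nw ^ 2) (hC0 : 0 ≤ C) (hC1 : C ≤ 1) : a ≤ C := by
  have hC2 : C ^ 2 ≤ 1 := pow_le_one₀ hC0 hC1
  have h3 : c ^ 2 ≤ C ^ 2 := by
    nlinarith [mul_nonpos_of_nonpos_of_nonneg (by linarith : C ^ 2 - 1 ≤ 0) (sq_nonneg b)]
  have h4 : a ^ 2 ≤ C ^ 2 := le_trans (pow_le_pow_left₀ ha0 ha 2) h3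
  nlinarith

/-- If `F = W ⊕ V` with `V ⊥ W`, and `W̃` has the same dimension as `W` with
`W̃ ∩ V = 0`, `F̃ = W̃ ⊕ V`, then
`sup_{v ∈ F̃ ∩ V^⊥, ‖v‖=1} ‖pr_{F^⊥} v‖ ≤ sup_{w ∈ W̃, ‖w‖=1} ‖pr_{W^⊥} w‖`. -/
theorem stmt7 (t : ℕ)
    (W V Wt : Submodule ℂ (EuclideanSpace ℂ (Fin (t + 1))))
    (hperp : V ≤ Wᗮ)
    (hdim : finrank ℂ W = finrank ℂ Wt)
    (hdisj : Wt ⊓ V = ⊥) :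
    (⨆ v : {v : EuclideanSpace ℂ (Fin (t + 1)) // v ∈ (Wt ⊔ V) ⊓ Vᗮ ∧ ‖v‖ = 1},
        ‖(Submodule.orthogonalProjection (W ⊔ V)ᗮ (v : EuclideanSpace ℂ (Fin (t + 1))) :
            EuclideanSpace ℂ (Fin (t + 1)))‖) ≤
    ⨆ w : {w : EuclideanSpace ℂ (Fin (t + 1)) // w ∈ Wt ∧ ‖w‖ = 1},
        ‖(Submodule.orthogonalProjection Wᗮ (w : EuclideanSpace ℂ (Fin (t + 1))) :
            EuclideanSpace ℂ (Fin (t + 1)))‖ := by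
  set E := EuclideanSpace ℂ (Fin (t + 1))
  set C := ⨆ w : {w : E // w ∈ Wt ∧ ‖w‖ = 1},
      ‖(orthogonalProjection Wᗮ (w : E) : E)‖ with hCdef
  have hC0 : 0 ≤ C := Real.iSup_nonneg fun _ => norm_nonneg _
  have hbdd : BddAbove (Set.range fun w : {w : E // w ∈ Wt ∧ ‖w‖ = 1} =>
      ‖(orthogonalProjection Wᗮ (w : E) : E)‖) := by
    refine ⟨1, ?_⟩
    rintro x ⟨w, rfl⟩
    calc ‖(orthogonalProjection Wᗮ (w : E) : E)‖ ≤ ‖(w : E)‖ := norm_orthProj_le' _ _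
      _ = 1 := w.2.2
  have hC1 : C ≤ 1 := by
    apply Real.iSup_le _ zero_le_one
    intro w
    calc ‖(orthogonalProjection Wᗮ (w : E) : E)‖ ≤ ‖(w : E)‖ := norm_orthProj_le' _ _
      _ = 1 := w.2.2
  clear_value C
  apply Real.iSup_le _ hC0
  rintro ⟨v, ⟨hvF, hvV⟩, hv1⟩
  simp only
  obtain ⟨w, hw, u, hu, hwu⟩ := Submodule.mem_sup.mp hvF
  have hw0 : w ≠ 0 := by
    rintro rfl
    rw [zero_add] at hwu
    have : v ∈ V ⊓ Vᗮ := ⟨hwu ▸ hu, hvV⟩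
    rw [Submodule.inf_orthogonal_eq_bot] at this
    rw [this] at hv1
    simp at hv1
  have hle1 : (W ⊔ V)ᗮ ≤ Wᗮ := Submodule.orthogonal_le le_sup_left
  have hle2 : (W ⊔ V)ᗮ ≤ Vᗮ := Submodule.orthogonal_le le_sup_right
  set p : E := (orthogonalProjection Wᗮ w : E) with hpdef
  clear_value p
  have hPu : (orthogonalProjection (W ⊔ V)ᗮ u : E) = 0 := by
    rw [orthogonalProjectionOnto_orthogonal_apply_eq_zero
      (le_sup_right (a := W) hu)]
    rfl
  have hPv : (orthogonalProjection (W ⊔ V)ᗮ v : E)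
      = (orthogonalProjection (W ⊔ V)ᗮ w : E) := by
    rw [← hwu, map_add]
    push_cast
    rw [hPu, add_zero]
  have hPw : (orthogonalProjection (W ⊔ V)ᗮ w : E)
      = (orthogonalProjection (W ⊔ V)ᗮ p : E) := by
    rw [hpdef, ← starProjection_apply Wᗮ w, orthogonalProjectionOnto_starProjection_of_le hle1]
  have hPp : (orthogonalProjection (W ⊔ V)ᗮ p : E)
      = (orthogonalProjection (W ⊔ V)ᗮ (orthogonalProjection Vᗮ p : E) : E) := by
    rw [← starProjection_apply Vᗮ p, orthogonalProjectionOnto_starProjection_of_le hle2]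
  -- scalar abbreviations
  set a : ℝ := ‖(orthogonalProjection (W ⊔ V)ᗮ v : E)‖ with hadef
  set c : ℝ := ‖(orthogonalProjection Vᗮ p : E)‖ with hcdef
  set b : ℝ := ‖(orthogonalProjection V w : E)‖ with hbdef
  have ha0 : 0 ≤ a := norm_nonneg _
  have hc0 : 0 ≤ c := norm_nonneg _
  clear_value a c b
  have ha : a ≤ c := by
    rw [hadef, hcdef, hPv, hPw, hPp]
    exact norm_orthProj_le' _ _
  have hVp : (orthogonalProjection V p : E) = (orthogonalProjection V w : E) := by
    rw [hpdef, ← starProjection_apply Wᗮ w, orthogonalProjectionOnto_starProjection_of_le hperp]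
  have hpyth : ‖p‖ ^ 2 = b ^ 2 + c ^ 2 := by
    have h := norm_sq_eq_add_norm_sq_projection p V
    rw [hbdef, hcdef, ← hVp]
    exact h
  have hVw : (orthogonalProjection Vᗮ w : E) = v := by
    have h1 : (orthogonalProjection Vᗮ v : E) = v :=
      starProjection_eq_self_iff.mpr hvV
    have h2 : (orthogonalProjection Vᗮ u : E) = 0 := by
      rw [orthogonalProjectionOnto_orthogonal_apply_eq_zero hu]; rfl
    have h3 := congrArg (fun x : E => (orthogonalProjection Vᗮ x : E)) hwu
    simp only [map_add] at h3
    push_cast at h3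
    rw [h2, add_zero] at h3
    rw [h3, h1]
  have hwn : ‖w‖ ^ 2 = b ^ 2 + 1 := by
    have h : ‖w‖ ^ 2 = b ^ 2 + ‖v‖ ^ 2 := by
      rw [hbdef, ← hVw]
      exact norm_sq_eq_add_norm_sq_projection w V
    rw [hv1] at h
    linarith
  have hpC : ‖p‖ ≤ C * ‖w‖ := by
    have hwn0 : ‖w‖ ≠ 0 := norm_ne_zero_iff.mpr hw0
    set w' : E := ((‖w‖ : ℂ))⁻¹ • w with hw'def
    have hw'mem : w' ∈ Wt := Submodule.smul_mem _ _ hw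
    have hw'norm : ‖w'‖ = 1 := by
      rw [hw'def, norm_smul]
      simp [hwn0]
    have hle : ‖(orthogonalProjection Wᗮ w' : E)‖ ≤ C := by
      rw [hCdef]
      exact le_ciSup hbdd (⟨w', hw'mem, hw'norm⟩ : {w : E // w ∈ Wt ∧ ‖w‖ = 1})
    have hsm : (orthogonalProjection Wᗮ w' : E) = ((‖w‖ : ℂ))⁻¹ • p := by
      rw [hw'def, hpdef, map_smul, Submodule.coe_smul]
    rw [hsm, norm_smul] at hle
    have hnn : ‖((‖w‖ : ℂ))⁻¹‖ = ‖w‖⁻¹ := by simp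
    rw [hnn] at hle
    calc ‖p‖ = ‖w‖ * (‖w‖⁻¹ * ‖p‖) := by field_simp
      _ ≤ ‖w‖ * C := by gcongr
      _ = C * ‖w‖ := mul_comm _ _
  set np : ℝ := ‖p‖ with hnpdef
  set nw : ℝ := ‖w‖ with hnwdef
  have hnp0 : 0 ≤ np := norm_nonneg _
  clear_value np nw
  have h2 : np ^ 2 ≤ C ^ 2 * nw ^ 2 := by
    have h := pow_le_pow_left₀ hnp0 hpC 2
    calc np ^ 2 ≤ (C * nw) ^ 2 := h
      _ = C ^ 2 * nw ^ 2 := by ring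
  exact stmt7_aux a b c np nw C ha0 hc0 ha hpyth hwn h2 hC0 hC1
end

section
/- Let Z₀, Z₁ be finite lists of points z⁰₁,…,z⁰_{m} and z¹₁,…,z¹_{n} in a metric space with distinguished point θ, ordered by increasing distance to θ: |z⁰₁,θ| ≤ ⋯ ≤ |z⁰_m,θ| and |z¹₁,θ| ≤ ⋯ ≤ |z¹_n,θ|, with all m + n + mn distances pairwise distinct. Define the merge path f = (f₀,f₁): {0,…,m+n} → {0,…,m}×{0,…,n} by f(k) = (ν₀,ν₁) iff k = ν₀+ν₁ and some t separates: |z⁰_{ν₀},θ| < t < |z⁰_{ν₀+1},θ| and |z¹_{ν₁},θ| < t < |z¹_{ν₁+1},θ|; set i_k = 0 if f₁(k) > f₁(k-1), else i_k = 1. Given a 'join distance' d(z⁰_i, z¹_j) satisfying min(|z⁰_i,θ|,|z¹_j,θ|) ≤ d(z⁰_i,z¹_j) ≤ max(|z⁰_i,θ|,|z¹_j,θ|), one has for any K with f₀(K) < m or f₁(K) < n: ∑_{i=1}^{m} ∑_{j=1}^{n} log d(z⁰_i,z¹_j) ≤ ∑_{k=1}^{K} ∑_{l=f_{i_k}(k)+1}^{deg_{i_k}}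 log |θ, z^{i_k}_l|, where deg₀ = m, deg₁ = n. -/
/-!
Every `log c i j` is at most `log (max (a i) (b j)) ≤ 0`, so the left-hand side is bounded by the
sum of `log (max (a i) (b j))` over any set of pairs. Charge the pair `(i, j)` to the smaller of
`a i`, `b j`, and let `W p q` be the total charge of the first `p` points `a i` and the first
`q` points `b j`; it only decreases as `p, q` grow, and `W m n` dominates the left-hand side.
Along the merge path one more point is passed at each step, and the separating thresholds show
that the points charged to it are exactly the not yet passed points of the other list. Hence
`W` telescopes to the right-hand side: it equals the sum up to `K` at the state `(f₀ K, f₁ K)`.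
-/

open Finset Real

section Merge

variable {a b : ℕ → ℝ} {m n p q : ℕ}

def SplitsAt (a : ℕ → ℝ) (m p : ℕ) (T : ℝ) : Prop :=
  (∀ i < p, a i < T) ∧ ∀ i, p ≤ i → i < m → T < a i

theorem SplitsAt.of_le_of_le {T T' x : ℝ} (h : SplitsAt a m p T) (h' : SplitsAt a m p T')
    (hT : T ≤ x) (hT' : x ≤ T') : SplitsAt a m p x :=
  ⟨fun i hi => (h.1 i hi).trans_le hT, fun i hpi him => hT'.trans_lt (h'.2 i hpi him)⟩

theorem SplitsAt.sum_range_ite_lt {x : ℝ} (h : SplitsAt a m p x) (g : ℕ → ℝ) :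
    ∑ i ∈ range m, (if x < a i then g i else 0) = ∑ i ∈ Ico p m, g i := by
  rw [← sum_filter]
  congr 1
  ext i
  simp only [mem_filter, mem_range, mem_Ico]
  constructor
  · rintro ⟨him, hx⟩
    refine ⟨not_lt.1 fun hip => ?_, him⟩
    exact (h.1 i hip).not_gt hx
  · rintro ⟨hpi, him⟩
    exact ⟨him, h.2 i hpi him⟩

def IsMergeState (a b : ℕ → ℝ) (m n p q : ℕ) : Prop :=
  ∃ T, SplitsAt a m p T ∧ SplitsAt b n q T

theorem IsMergeState.swap (h : IsMergeState a b m n p q) : IsMergeState b a n m q p :=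
  let ⟨T, ha, hb⟩ := h
  ⟨T, hb, ha⟩

theorem IsMergeState.le_of_lt_left {p' q' : ℕ} (h : IsMergeState a b m n p q)
    (h' : IsMergeState a b m n p' q') (hp : p < p') (hp' : p' ≤ m) (hq : q ≤ n) : q ≤ q' := by
  obtain ⟨T, ha, hb⟩ := h
  obtain ⟨T', ha', hb'⟩ := h'
  by_contra! hq'
  exact lt_irrefl (a p) <| calc
    a p < T' := ha'.1 p hp
    _ < b q' := hb'.2 q' le_rfl (by omega)
    _ < T := hb.1 q' hq'
    _ < a p := ha.2 p le_rfl (by omega)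

noncomputable def logSumAbove (x y : ℕ → ℝ) (n p : ℕ) : ℝ :=
  ∑ i ∈ range p, ∑ j ∈ range n, if x i < y j then log (y j) else 0

theorem logSumAbove_antitone {x y : ℕ → ℝ} (hy : ∀ j < n, 0 < y j ∧ y j ≤ 1) :
    Antitone (logSumAbove x y n) := by
  intro p p' hpp'
  refine sum_le_sum_of_subset_of_nonpos' (range_subset_range.2 hpp') fun i _ _ => ?_
  refine sum_nonpos fun j hj => ?_
  obtain ⟨hy0, hy1⟩ := hy j (mem_range.1 hj)
  split_ifs
  exacts [log_nonpos hy0.le hy1, le_rfl]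

noncomputable def mergePotential (a b : ℕ → ℝ) (m n p q : ℕ) : ℝ :=
  logSumAbove a b n p + logSumAbove b a m q

theorem mergePotential_comm : mergePotential a b m n p q = mergePotential b a n m q p :=
  add_comm _ _

theorem mergePotential_le_of_le {p' q' : ℕ} (ha : ∀ i < m, 0 < a i ∧ a i ≤ 1)
    (hb : ∀ j < n, 0 < b j ∧ b j ≤ 1) (hp : p ≤ p') (hq : q ≤ q') :
    mergePotential a b m n p' q' ≤ mergePotential a b m n p q :=
  add_le_add (logSumAbove_antitone hb hp) (logSumAbove_antitone ha hq)

theorem mergePotential_succ_right (h : IsMergeState a b m n p q)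
    (h' : IsMergeState a b m n p (q + 1)) (hq : q < n) :
    mergePotential a b m n p (q + 1) =
      mergePotential a b m n p q + ∑ i ∈ Ico p m, log (a i) := by
  obtain ⟨T, ha, hb⟩ := h
  obtain ⟨T', ha', hb'⟩ := h'
  have hsplit : SplitsAt a m p (b q) :=
    ha.of_le_of_le ha' (hb.2 q le_rfl hq).le (hb'.1 q q.lt_succ_self).le
  simp only [mergePotential, logSumAbove, sum_range_succ _ q, hsplit.sum_range_ite_lt, add_assoc]

theorem mergePotential_succ_left (h : IsMergeState a b m n p q)
    (h' : IsMergeState a b m n (p + 1) q) (hp : p < m) :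
    mergePotential a b m n (p + 1) q =
      mergePotential a b m n p q + ∑ j ∈ Ico q n, log (b j) := by
  rw [mergePotential_comm, mergePotential_comm (p := p)]
  exact mergePotential_succ_right h.swap h'.swap hp

theorem mergePotential_step {p' q' ι : ℕ} (h : IsMergeState a b m n p q)
    (h' : IsMergeState a b m n p' q') (hsum : p' + q' = p + q + 1) (hp : p ≤ m) (hp' : p' ≤ m)
    (hq' : q' ≤ n) (hι : (ι = 0 ∧ q < q') ∨ (ι = 1 ∧ q = q')) :
    mergePotential a b m n p' q' = mergePotential a b m n p q +
      if ι = 0 then ∑ i ∈ Ico p' m, log (a i) else ∑ j ∈ Ico q' n, log (b j) := by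
  rcases hι with ⟨rfl, hqq'⟩ | ⟨rfl, rfl⟩
  · have hpp' : p ≤ p' := not_lt.1 fun hlt => (h'.le_of_lt_left h hlt hp hq').not_gt hqq'
    obtain rfl : p' = p := by omega
    obtain rfl : q' = q + 1 := by omega
    rw [if_pos rfl, mergePotential_succ_right h h' (by omega)]
  · obtain rfl : p' = p + 1 := by omega
    rw [if_neg one_ne_zero, mergePotential_succ_left h h' (by omega)]

theorem log_max_le_ite_add_ite {x y : ℝ} (hx : 0 < x) (hx1 : x ≤ 1) (hy1 : y ≤ 1) :
    log (max x y) ≤ (if x < y then log y else 0) + (if y < x then log x else 0) := by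
  split_ifs with hxy hyx hyx
  · exact absurd (hxy.trans hyx) (lt_irrefl x)
  · rw [max_eq_right hxy.le, add_zero]
  · rw [max_eq_left hyx.le, zero_add]
  · rw [add_zero]
    exact log_nonpos (hx.le.trans (le_max_left x y)) (max_le hx1 hy1)

theorem sum_log_le_mergePotential {c : ℕ → ℕ → ℝ} (ha : ∀ i < m, 0 < a i ∧ a i ≤ 1)
    (hb : ∀ j < n, 0 < b j ∧ b j ≤ 1)
    (hc : ∀ i < m, ∀ j < n, min (a i) (b j) ≤ c i j ∧ c i j ≤ max (a i) (b j)) :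
    ∑ i ∈ range m, ∑ j ∈ range n, log (c i j) ≤ mergePotential a b m n m n := by
  rw [mergePotential, logSumAbove, logSumAbove, sum_comm (s := range n), ← sum_add_distrib]
  gcongr with i hi
  rw [← sum_add_distrib]
  gcongr with j hj
  rw [mem_range] at hi hj
  calc log (c i j) ≤ log (max (a i) (b j)) :=
        log_le_log (lt_min (ha i hi).1 (hb j hj).1 |>.trans_le (hc i hi j hj).1) (hc i hi j hj).2
    _ ≤ _ := log_max_le_ite_add_ite (ha i hi).1 (ha i hi).2 (hb j hj).2

end Merge

theorem stmt12_general (m n : ℕ) (a b : ℕ → ℝ) (c : ℕ → ℕ → ℝ)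
    (ha : ∀ i < m, 0 < a i ∧ a i ≤ 1) (hb : ∀ j < n, 0 < b j ∧ b j ≤ 1)
    (hc : ∀ i < m, ∀ j < n, min (a i) (b j) ≤ c i j ∧ c i j ≤ max (a i) (b j))
    (f₀ f₁ : ℕ → ℕ)
    (hf : ∀ k ≤ m + n, f₀ k + f₁ k = k ∧ f₀ k ≤ m ∧ f₁ k ≤ n ∧
      ∃ T : ℝ, (∀ i < f₀ k, a i < T) ∧ (∀ i, f₀ k ≤ i → i < m → T < a i) ∧
               (∀ j < f₁ k, b j < T) ∧ (∀ j, f₁ k ≤ j → j < n → T < b j))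
    (ι : ℕ → ℕ)
    (hι : ∀ k, 1 ≤ k → k ≤ m + n →
      (ι k = 0 ∧ f₁ (k - 1) < f₁ k) ∨ (ι k = 1 ∧ f₁ (k - 1) = f₁ k))
    (K : ℕ) (hK : K ≤ m + n) :
    ∑ i ∈ Finset.range m, ∑ j ∈ Finset.range n, Real.log (c i j) ≤
      ∑ k ∈ Finset.Icc 1 K,
        (if ι k = 0 then ∑ l ∈ Finset.Ico (f₀ k) m, Real.log (a l)
         else ∑ l ∈ Finset.Ico (f₁ k) n, Real.log (b l)) := by
  have hstate : ∀ k ≤ m + n, IsMergeState a b m n (f₀ k) (f₁ k) := fun k hk => by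
    obtain ⟨-, -, -, T, h₀, h₀', h₁, h₁'⟩ := hf k hk
    exact ⟨T, ⟨h₀, h₀'⟩, h₁, h₁'⟩
  have htelescope : ∀ k ≤ m + n, mergePotential a b m n (f₀ k) (f₁ k) =
      ∑ l ∈ Icc 1 k, (if ι l = 0 then ∑ i ∈ Ico (f₀ l) m, log (a i)
        else ∑ j ∈ Ico (f₁ l) n, log (b j)) := by
    intro k
    induction k with
    | zero =>
      intro h0
      obtain ⟨hsum, -⟩ := hf 0 h0
      simp [mergePotential, logSumAbove, Nat.eq_zero_of_add_eq_zero_left hsum,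
        Nat.eq_zero_of_add_eq_zero_right hsum]
    | succ k ih =>
      intro hk
      obtain ⟨hsum, hp, -⟩ := hf k (by omega)
      obtain ⟨hsum', hp', hq', -⟩ := hf (k + 1) hk
      have hstep := hι (k + 1) (by omega) hk
      rw [Nat.add_sub_cancel] at hstep
      rw [sum_Icc_succ_top (by omega), ← ih (by omega), mergePotential_step (hstate k (by omega))
        (hstate (k + 1) hk) (by omega) hp hp' hq' hstep]
  obtain ⟨-, hpK, hqK, -⟩ := hf K hK
  calc ∑ i ∈ range m, ∑ j ∈ range n, log (c i j) ≤ mergePotential a b m n m n :=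
        sum_log_le_mergePotential ha hb hc
    _ ≤ mergePotential a b m n (f₀ K) (f₁ K) := mergePotential_le_of_le ha hb hpK hqK
    _ = _ := htelescope K hK

/-- Combinatorial reordering inequality along the merge path for two sorted
lists of distances `a` (to `z⁰`) and `b` (to `z¹`) in `(0,1]`, with all values pairwise
distinct, and a matrix `c` of join distances sandwiched between min and max of the
marginals. -/
theorem stmt12 (m n : ℕ) (a b : ℕ → ℝ) (c : ℕ → ℕ → ℝ)
    (ha : ∀ i < m, 0 < a i ∧ a i ≤ 1) (hb : ∀ j < n, 0 < b j ∧ b j ≤ 1)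
    (hamono : ∀ i j, i ≤ j → j < m → a i ≤ a j)
    (hbmono : ∀ i j, i ≤ j → j < n → b i ≤ b j)
    (hc : ∀ i < m, ∀ j < n, min (a i) (b j) ≤ c i j ∧ c i j ≤ max (a i) (b j))
    (hd₁ : ∀ i < m, ∀ i' < m, a i = a i' → i = i')
    (hd₂ : ∀ j < n, ∀ j' < n, b j = b j' → j = j')
    (hd₃ : ∀ i < m, ∀ j < n, a i ≠ b j)
    (hd₄ : ∀ i < m, ∀ i' < m, ∀ j' < n, a i ≠ c i' j')
    (hd₅ : ∀ j < n, ∀ i' < m, ∀ j' < n, b j ≠ c i' j')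
    (hd₆ : ∀ i < m, ∀ j < n, ∀ i' < m, ∀ j' < n, c i j = c i' j' → i = i' ∧ j = j')
    (f₀ f₁ : ℕ → ℕ)
    (hf : ∀ k ≤ m + n, f₀ k + f₁ k = k ∧ f₀ k ≤ m ∧ f₁ k ≤ n ∧
      ∃ T : ℝ, (∀ i < f₀ k, a i < T) ∧ (∀ i, f₀ k ≤ i → i < m → T < a i) ∧
               (∀ j < f₁ k, b j < T) ∧ (∀ j, f₁ k ≤ j → j < n → T < b j))
    (ι : ℕ → ℕ)
    (hι : ∀ k, 1 ≤ k → k ≤ m + n →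
      (ι k = 0 ∧ f₁ (k - 1) < f₁ k) ∨ (ι k = 1 ∧ f₁ (k - 1) = f₁ k))
    (K : ℕ) (hK : K ≤ m + n) (hKlt : f₀ K < m ∨ f₁ K < n) :
    ∑ i ∈ Finset.range m, ∑ j ∈ Finset.range n, Real.log (c i j) ≤
      ∑ k ∈ Finset.Icc 1 K,
        (if ι k = 0 then ∑ l ∈ Finset.Ico (f₀ k) m, Real.log (a l)
         else ∑ l ∈ Finset.Ico (f₁ k) n, Real.log (b l)) :=
  stmt12_general m n a b c ha hb hc f₀ f₁ hf ι hι K hK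
end

section
/- Let a₁ ≤ a₂ ≤ ⋯ ≤ a_m and b₁ ≤ ⋯ ≤ b_n be numbers in (0,1], and c_{ij} values with min(a_i, b_j) ≤ c_{ij} ≤ max(a_i, b_j) for all i,j. Then for any 0 ≤ ν₀ ≤ m and 0 ≤ ν₁ ≤ n with the property that ν₀ + ν₁ is realized by the merge ordering (i.e. there is t with a_{ν₀} < t < a_{ν₀+1} and b_{ν₁} < t < b_{ν₁+1}, boundary cases interpreted appropriately), one has ∑_{i=1}^{m} ∑_{j=1}^{n} log c_{ij} ≤ ν₁ ∑_{i=ν₀+1}^{m} log a_i + ν₀ ∑_{j=ν₁+1}^{n} log b_j. -/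
/-!
Split the rows at `ν₀` and the columns at `ν₁`. Every `c i j` lies between `a i` and `b j`, all
in `(0, 1]`, so `log (c i j) ≤ 0`. Off the diagonal blocks the separating value `T` decides which
of the two is larger: for `i < ν₀ ≤ j` it is `b j`, for `j < ν₁ ≤ i` it is `a i`. Bounding the
diagonal blocks by `0` and the off-diagonal ones by these logarithms gives the right-hand side.
-/

open Finset Real

lemma log_le_log_of_mem_uIcc_of_le {x y z : ℝ} (hy : 0 < y) (hz : z ∈ Set.uIcc x y)
    (hyx : y ≤ x) : log z ≤ log x := by
  rw [Set.uIcc_of_ge hyx] at hz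
  exact log_le_log (hy.trans_le hz.1) hz.2

lemma log_nonpos_of_mem_uIcc {x y z : ℝ} (hx : 0 < x) (hy : 0 < y) (hx₁ : x ≤ 1) (hy₁ : y ≤ 1)
    (hz : z ∈ Set.uIcc x y) : log z ≤ 0 :=
  log_nonpos ((lt_min hx hy).le.trans hz.1) (hz.2.trans (max_le hx₁ hy₁))

lemma sum_range_le_sum_Ico_of_nonpos {f g : ℕ → ℝ} {k n : ℕ} (hf : ∀ j < k, f j ≤ 0)
    (hfg : ∀ j ∈ Ico k n, f j ≤ g j) : ∑ j ∈ range n, f j ≤ ∑ j ∈ Ico k n, g j :=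
  calc ∑ j ∈ range n, f j ≤ ∑ j ∈ Ico k n, f j :=
        sum_le_sum_of_subset_of_nonpos' (fun j hj => mem_range.2 (mem_Ico.1 hj).2)
          fun j hj hjk => hf j (by simp_all)
    _ ≤ ∑ j ∈ Ico k n, g j := sum_le_sum hfg

lemma sum_range_le_sum_range_of_nonpos {f g : ℕ → ℝ} {k n : ℕ} (hkn : k ≤ n)
    (hfg : ∀ j < k, f j ≤ g j) (hf : ∀ j ∈ Ico k n, f j ≤ 0) :
    ∑ j ∈ range n, f j ≤ ∑ j ∈ range k, g j :=
  calc ∑ j ∈ range n, f j ≤ ∑ j ∈ range k, f j :=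
        sum_le_sum_of_subset_of_nonpos' (range_mono hkn) fun j hjn hjk => hf j (by simp_all)
    _ ≤ ∑ j ∈ range k, g j := sum_le_sum fun j hj => hfg j (mem_range.1 hj)

lemma sum_range_sum_range_le_of_blocks {F : ℕ → ℕ → ℝ} {g h : ℕ → ℝ} {m n k₀ k₁ : ℕ}
    (hk₀ : k₀ ≤ m) (hk₁ : k₁ ≤ n) (hF : ∀ i < m, ∀ j < n, F i j ≤ 0)
    (hFh : ∀ i < k₀, ∀ j ∈ Ico k₁ n, F i j ≤ h j) (hFg : ∀ i ∈ Ico k₀ m, ∀ j < k₁, F i j ≤ g i) :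
    ∑ i ∈ range m, ∑ j ∈ range n, F i j ≤
      k₁ * ∑ i ∈ Ico k₀ m, g i + k₀ * ∑ j ∈ Ico k₁ n, h j := by
  have top : ∀ i ∈ range k₀, ∑ j ∈ range n, F i j ≤ ∑ j ∈ Ico k₁ n, h j := fun i hi =>
    sum_range_le_sum_Ico_of_nonpos
      (fun j hj => hF i ((mem_range.1 hi).trans_le hk₀) j (hj.trans_le hk₁)) (hFh i (mem_range.1 hi))
  have bottom : ∀ i ∈ Ico k₀ m, ∑ j ∈ range n, F i j ≤ k₁ * g i := fun i hi =>
    calc ∑ j ∈ range n, F i j ≤ ∑ _j ∈ range k₁, g i :=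
          sum_range_le_sum_range_of_nonpos hk₁ (hFg i hi)
            fun j hj => hF i (mem_Ico.1 hi).2 j (mem_Ico.1 hj).2
      _ = k₁ * g i := by rw [sum_const, card_range, nsmul_eq_mul]
  calc ∑ i ∈ range m, ∑ j ∈ range n, F i j
      = ∑ i ∈ range k₀, ∑ j ∈ range n, F i j + ∑ i ∈ Ico k₀ m, ∑ j ∈ range n, F i j :=
        (sum_range_add_sum_Ico _ hk₀).symm
    _ ≤ ∑ _i ∈ range k₀, ∑ j ∈ Ico k₁ n, h j + ∑ i ∈ Ico k₀ m, k₁ * g i :=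
        add_le_add (sum_le_sum top) (sum_le_sum bottom)
    _ = _ := by rw [sum_const, card_range, nsmul_eq_mul, ← mul_sum, add_comm]

theorem stmt13_general (m n : ℕ) (a b : ℕ → ℝ) (c : ℕ → ℕ → ℝ)
    (ha : ∀ i < m, 0 < a i ∧ a i ≤ 1) (hb : ∀ j < n, 0 < b j ∧ b j ≤ 1)
    (hc : ∀ i < m, ∀ j < n, min (a i) (b j) ≤ c i j ∧ c i j ≤ max (a i) (b j))
    (ν₀ ν₁ : ℕ) (hν₀ : ν₀ ≤ m) (hν₁ : ν₁ ≤ n)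
    (hsep : ∃ T : ℝ, (∀ i < ν₀, a i < T) ∧ (∀ i, ν₀ ≤ i → i < m → T < a i) ∧
                     (∀ j < ν₁, b j < T) ∧ (∀ j, ν₁ ≤ j → j < n → T < b j)) :
    ∑ i ∈ Finset.range m, ∑ j ∈ Finset.range n, Real.log (c i j) ≤
      (ν₁ : ℝ) * ∑ i ∈ Finset.Ico ν₀ m, Real.log (a i) +
      (ν₀ : ℝ) * ∑ j ∈ Finset.Ico ν₁ n, Real.log (b j) := by
  obtain ⟨T, ha_lt, lt_ha, hb_lt, lt_hb⟩ := hsep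
  refine sum_range_sum_range_le_of_blocks hν₀ hν₁
    (fun i hi j hj => log_nonpos_of_mem_uIcc (ha i hi).1 (hb j hj).1 (ha i hi).2 (hb j hj).2
      (hc i hi j hj)) (fun i hi j hj => ?_) (fun i hi j hj => ?_)
  · obtain ⟨hνj, hjn⟩ := mem_Ico.1 hj
    have him : i < m := hi.trans_le hν₀
    exact log_le_log_of_mem_uIcc_of_le (ha i him).1 (Set.uIcc_comm (a i) (b j) ▸ hc i him j hjn)
      ((ha_lt i hi).trans (lt_hb j hνj hjn)).le
  · obtain ⟨hνi, him⟩ := mem_Ico.1 hi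
    have hjn : j < n := hj.trans_le hν₁
    exact log_le_log_of_mem_uIcc_of_le (hb j hjn).1 (hc i him j hjn)
      ((hb_lt j hj).trans (lt_ha i hνi him)).le

/-- For sorted `a` (length `m`), `b` (length `n`) in `(0,1]` and a matrix
`c` with `min(aᵢ,bⱼ) ≤ cᵢⱼ ≤ max(aᵢ,bⱼ)`, and `(ν₀,ν₁)` realized by the merge ordering,
`∑∑ log cᵢⱼ ≤ ν₁ ∑_{i>ν₀} log aᵢ + ν₀ ∑_{j>ν₁} log bⱼ`. -/
theorem stmt13 (m n : ℕ) (a b : ℕ → ℝ) (c : ℕ → ℕ → ℝ)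
    (ha : ∀ i < m, 0 < a i ∧ a i ≤ 1) (hb : ∀ j < n, 0 < b j ∧ b j ≤ 1)
    (hamono : ∀ i j, i ≤ j → j < m → a i ≤ a j)
    (hbmono : ∀ i j, i ≤ j → j < n → b i ≤ b j)
    (hc : ∀ i < m, ∀ j < n, min (a i) (b j) ≤ c i j ∧ c i j ≤ max (a i) (b j))
    (ν₀ ν₁ : ℕ) (hν₀ : ν₀ ≤ m) (hν₁ : ν₁ ≤ n)
    (hsep : ∃ T : ℝ, (∀ i < ν₀, a i < T) ∧ (∀ i, ν₀ ≤ i → i < m → T < a i) ∧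
                     (∀ j < ν₁, b j < T) ∧ (∀ j, ν₁ ≤ j → j < n → T < b j)) :
    ∑ i ∈ Finset.range m, ∑ j ∈ Finset.range n, Real.log (c i j) ≤
      (ν₁ : ℝ) * ∑ i ∈ Finset.Ico ν₀ m, Real.log (a i) +
      (ν₀ : ℝ) * ∑ j ∈ Finset.Ico ν₁ n, Real.log (b j) :=
  stmt13_general m n a b c ha hb hc ν₀ ν₁ hν₀ hν₁ hsep
end
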